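/- arXiv:2505.19427 — 4 statements merged into one kernel-verified Lean document; each statement's English description precedes it below -/
import Mathlib

section
/- Let W ∈ ℝ^{m×n} have orthogonal columns and x ∈ ℝⁿ. For any K < n, among all binary masks g ∈ {0,1}ⁿ with exactly K ones, the minimizer of ‖Wx − W(g⊙x)‖₂ is the mask that keeps the K indices i with the largest values of |x_i| · ‖W_{·,i}‖₂. -/
open Finset

/-- Euclidean norm of a vector. -/
noncomputable def eN {m : ℕ} (v : Fin m → ℝ) : ℝ := Real.sqrt (∑ k, v k ^ 2)

/-- Hadamard product of the binary mask given by a kept-index set `S` with `x`. -/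
def maskV {n : ℕ} (S : Finset (Fin n)) (x : Fin n → ℝ) : Fin n → ℝ :=
  fun i => if i ∈ S then x i else 0

/-- Euclidean norm of the `i`-th column of `W`. -/
noncomputable def colN {m n : ℕ} (W : Matrix (Fin m) (Fin n) ℝ) (i : Fin n) : ℝ :=
  Real.sqrt (∑ k, W k i ^ 2)

lemma err_sq (m n : ℕ) (W : Matrix (Fin m) (Fin n) ℝ) (x : Fin n → ℝ)
    (horth : ∀ i j : Fin n, i ≠ j → ∑ k, W k i * W k j = 0)
    (T : Finset (Fin n)) :
    ∑ k, (W.mulVec x k - W.mulVec (maskV T x) k)^2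
      = ∑ i, (if i ∈ T then 0 else x i ^ 2 * ∑ k, W k i ^ 2) := by
  have h1 : ∀ k, W.mulVec x k - W.mulVec (maskV T x) k
      = ∑ i, W k i * (if i ∈ T then 0 else x i) := by
    intro k
    simp only [Matrix.mulVec, dotProduct, maskV, ← Finset.sum_sub_distrib]
    refine Finset.sum_congr rfl fun i _ => ?_
    split <;> ring
  set y : Fin n → ℝ := fun i => if i ∈ T then 0 else x i with hy
  simp_rw [h1]
  have h2 : ∀ k, (∑ i, W k i * y i)^2 = ∑ i, ∑ j, (W k i * y i) * (W k j * y j) := by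
    intro k
    rw [sq, Finset.sum_mul_sum]
  rw [show (∑ k, (∑ i, W k i * if i ∈ T then 0 else x i) ^ 2) = ∑ k, (∑ i, W k i * y i) ^ 2 from rfl]
  simp_rw [h2]
  rw [Finset.sum_comm]
  have h3 : ∀ i, ∑ k, ∑ j, (W k i * y i) * (W k j * y j)
      = y i ^ 2 * ∑ k, W k i ^ 2 := by
    intro i
    rw [Finset.sum_comm]
    rw [Finset.sum_eq_single i]
    · rw [Finset.mul_sum]; refine Finset.sum_congr rfl fun k _ => ?_; ring
    · intro j _ hji
      have := horth i j (Ne.symm hji)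
      have : ∑ k, (W k i * y i) * (W k j * y j) = (y i * y j) * ∑ k, W k i * W k j := by
        rw [Finset.mul_sum]; refine Finset.sum_congr rfl fun k _ => ?_; ring
      rw [this, horth i j (Ne.symm hji), mul_zero]
    · intro h; exact absurd (Finset.mem_univ i) h
  simp_rw [h3, hy]
  refine Finset.sum_congr rfl fun i _ => ?_
  split <;> simp
/-- for column-orthogonal `W`, among all binary masks keeping exactly `K`
coordinates, a mask keeping `K` indices with the largest `|x i| * ‖W_{·,i}‖₂`
minimizes the gating error `‖Wx − W(g ⊙ x)‖₂`. -/
theorem wina_topK_mask_optimal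
    (m n : ℕ) (W : Matrix (Fin m) (Fin n) ℝ) (x : Fin n → ℝ)
    (horth : ∀ i j : Fin n, i ≠ j → ∑ k, W k i * W k j = 0)
    (K : ℕ) (hK : K < n)
    (S : Finset (Fin n)) (hScard : S.card = K)
    (hStop : ∀ i ∈ S, ∀ j ∉ S, |x j| * colN W j ≤ |x i| * colN W i) :
    ∀ T : Finset (Fin n), T.card = K →
      eN (fun k => W.mulVec x k - W.mulVec (maskV S x) k)
        ≤ eN (fun k => W.mulVec x k - W.mulVec (maskV T x) k) := by
  intro T hTcard
  unfold eN
  apply Real.sqrt_le_sqrt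
  rw [err_sq m n W x horth S, err_sq m n W x horth T]
  set c : Fin n → ℝ := fun i => x i ^ 2 * ∑ k, W k i ^ 2 with hc
  have hc0 : ∀ i, 0 ≤ c i := fun i =>
    mul_nonneg (sq_nonneg _) (Finset.sum_nonneg fun k _ => sq_nonneg _)
  have hcsq : ∀ i, c i = (|x i| * colN W i)^2 := by
    intro i
    rw [mul_pow, sq_abs, colN, Real.sq_sqrt (Finset.sum_nonneg fun k _ => sq_nonneg _)]
  have hmono : ∀ i ∈ S, ∀ j ∉ S, c j ≤ c i := by
    intro i hi j hj
    rw [hcsq i, hcsq j]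
    have h := hStop i hi j hj
    have h0 : 0 ≤ |x j| * colN W j :=
      mul_nonneg (abs_nonneg _) (Real.sqrt_nonneg _)
    exact pow_le_pow_left₀ h0 h 2
  -- reduce to sums over T and S
  have hsplit : ∀ U : Finset (Fin n),
      ∑ i, (if i ∈ U then 0 else c i) = (∑ i, c i) - ∑ i ∈ U, c i := by
    intro U
    rw [eq_sub_iff_add_eq, ← Finset.sum_add_sum_compl U (fun i => if i ∈ U then 0 else c i)]
    have h1 : ∑ i ∈ U, (if i ∈ U then 0 else c i) = 0 :=
      Finset.sum_eq_zero fun i hi => by simp [hi]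
    have h2 : ∑ i ∈ Uᶜ, (if i ∈ U then 0 else c i) = ∑ i ∈ Uᶜ, c i :=
      Finset.sum_congr rfl fun i hi => by simp [Finset.mem_compl.mp hi]
    rw [h1, h2, zero_add]; exact Finset.sum_compl_add_sum U c
  rw [hsplit S, hsplit T]
  have key : ∑ i ∈ T, c i ≤ ∑ i ∈ S, c i := by
    have hST : (S \ T).card = (T \ S).card :=
      Finset.card_sdiff_comm (hScard.trans hTcard.symm)
    have e : (T \ S : Finset (Fin n)) ≃ (S \ T : Finset (Fin n)) :=
      Finset.equivOfCardEq hST.symm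
    have hdiff : ∑ i ∈ T \ S, c i ≤ ∑ i ∈ S \ T, c i := by
      rw [← Finset.sum_coe_sort (T \ S) c, ← Finset.sum_coe_sort (S \ T) c]
      rw [← Equiv.sum_comp e (fun i : (S \ T : Finset (Fin n)) => c i)]
      refine Finset.sum_le_sum fun j _ => ?_
      have hj : (j : Fin n) ∉ S := (Finset.mem_sdiff.mp j.2).2
      have hi : ((e j : (S \ T : Finset (Fin n))) : Fin n) ∈ S :=
        (Finset.mem_sdiff.mp (e j).2).1
      exact hmono _ hi _ hj
    have hT : ∑ i ∈ T, c i = ∑ i ∈ T ∩ S, c i + ∑ i ∈ T \ S, c i :=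
      (Finset.sum_inter_add_sum_sdiff T S c).symm
    have hS : ∑ i ∈ S, c i = ∑ i ∈ S ∩ T, c i + ∑ i ∈ S \ T, c i :=
      (Finset.sum_inter_add_sum_sdiff S T c).symm
    rw [hT, hS, Finset.inter_comm]
    exact add_le_add_right hdiff _
  linarith
end

section
/- Let W ∈ ℝ^{m×n} have orthogonal columns, x ∈ ℝⁿ, and let g be the WINA mask keeping the top-K indices by |x_i|·‖W_{·,i}‖₂. Then ‖Wx − W(g⊙x)‖₂² equals the sum of the n−K smallest values of x_i²·‖W_{·,i}‖₂². -/
open Finset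

/-- Squared Euclidean norm of a vector. -/
noncomputable def sqN {m : ℕ} (v : Fin m → ℝ) : ℝ := ∑ k, v k ^ 2

/-- for column-orthogonal `W` and the WINA mask `S` keeping the top-`K`
indices by `|x i| * ‖W_{·,i}‖₂`, the squared gating error equals the sum of the
`n − K` smallest values of `x i ^ 2 * ‖W_{·,i}‖₂²` (i.e., the sum over the complement
of `S`, whose scores are all dominated by those in `S`). -/
theorem wina_topK_mask_error_value
    (m n : ℕ) (W : Matrix (Fin m) (Fin n) ℝ) (x : Fin n → ℝ)
    (horth : ∀ i j : Fin n, i ≠ j → ∑ k, W k i * W k j = 0)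
    (K : ℕ) (hK : K ≤ n)
    (S : Finset (Fin n)) (hScard : S.card = K)
    (hStop : ∀ i ∈ S, ∀ j ∉ S, |x j| * colN W j ≤ |x i| * colN W i) :
    Sᶜ.card = n - K ∧
    (∀ i ∈ S, ∀ j ∈ Sᶜ, x j ^ 2 * colN W j ^ 2 ≤ x i ^ 2 * colN W i ^ 2) ∧
    sqN (fun k => W.mulVec x k - W.mulVec (maskV S x) k)
      = ∑ i ∈ Sᶜ, x i ^ 2 * colN W i ^ 2 := by
  have hcol : ∀ i, colN W i ^ 2 = ∑ k, W k i ^ 2 := by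
    intro i
    have : (0:ℝ) ≤ ∑ k, W k i ^ 2 := Finset.sum_nonneg fun k _ => sq_nonneg _
    simp [colN, Real.sq_sqrt this]
  refine ⟨?_, ?_, ?_⟩
  · simp [Finset.card_compl, hScard]
  · intro i hi j hj
    have hj' := Finset.mem_compl.mp hj
    have h := hStop i hi j hj'
    have h0j : (0:ℝ) ≤ |x j| * colN W j :=
      mul_nonneg (abs_nonneg _) (Real.sqrt_nonneg _)
    have := mul_self_le_mul_self h0j h
    calc x j ^ 2 * colN W j ^ 2 = (|x j| * colN W j) * (|x j| * colN W j) := by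
          ring_nf; rw [sq_abs]; ring
      _ ≤ (|x i| * colN W i) * (|x i| * colN W i) := this
      _ = x i ^ 2 * colN W i ^ 2 := by ring_nf; rw [sq_abs]; ring
  · set v : Fin n → ℝ := fun i => if i ∈ S then 0 else x i with hv
    have hdiff : ∀ k, W.mulVec x k - W.mulVec (maskV S x) k = W.mulVec v k := by
      intro k
      simp only [Matrix.mulVec, dotProduct, ← Finset.sum_sub_distrib]
      apply Finset.sum_congr rfl
      intro i _
      by_cases h : i ∈ S <;> simp [maskV, hv, h]
    calc sqN (fun k => W.mulVec x k - W.mulVec (maskV S x) k)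
        = ∑ k, (∑ i, W k i * v i) ^ 2 := by
          simp only [sqN, hdiff]; rfl
      _ = ∑ k, ∑ i, ∑ j, (W k i * v i) * (W k j * v j) := by
          apply Finset.sum_congr rfl; intro k _
          rw [sq, Finset.sum_mul_sum]
      _ = ∑ i, ∑ j, (v i * v j) * ∑ k, W k i * W k j := by
          rw [Finset.sum_comm]
          apply Finset.sum_congr rfl; intro i _
          rw [Finset.sum_comm]
          apply Finset.sum_congr rfl; intro j _
          rw [Finset.mul_sum]
          apply Finset.sum_congr rfl; intro k _; ring
      _ = ∑ i, v i ^ 2 * ∑ k, W k i ^ 2 := by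
          apply Finset.sum_congr rfl; intro i _
          rw [Finset.sum_eq_single i]
          · ring_nf
          · intro j _ hji; rw [horth i j (Ne.symm hji)]; ring
          · intro h; exact absurd (Finset.mem_univ i) h
      _ = ∑ i ∈ Sᶜ, x i ^ 2 * colN W i ^ 2 := by
          rw [← Finset.sum_compl_add_sum S]
          have h1 : ∑ i ∈ S, v i ^ 2 * ∑ k, W k i ^ 2 = 0 := by
            apply Finset.sum_eq_zero; intro i hi; simp [hv, hi]
          rw [h1, add_zero]
          apply Finset.sum_congr rfl; intro i hi
          rw [hcol, hv]
          simp [Finset.mem_compl.mp hi]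
end

section
/- Let W ∈ ℝ^{m×n} have orthogonal columns, and let x ∈ ℝⁿ. For any K, the error of the WINA mask (keeping top-K indices by |x_i|·‖W_{·,i}‖₂) is less than or equal to the error of the magnitude-only mask (keeping top-K indices by |x_i|): ‖Wx − W(g_WINA ⊙ x)‖₂ ≤ ‖Wx − W(g_TEAL ⊙ x)‖₂. -/
open Finset

/-- If `|A| = |B|` and every value of `f` on `B` is at most every value on `A`,
then `∑_B f ≤ ∑_A f`. -/
lemma aux_sum_le_sum_of_card_eq {α : Type*} [DecidableEq α] (f : α → ℝ)
    (A B : Finset α) (hcard : A.card = B.card)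
    (h : ∀ a ∈ A, ∀ b ∈ B, f b ≤ f a) :
    ∑ b ∈ B, f b ≤ ∑ a ∈ A, f a := by
  rcases A.eq_empty_or_nonempty with rfl | hA
  · have : B = ∅ := Finset.card_eq_zero.mp (by simp [← hcard])
    simp [this]
  obtain ⟨a, ha, hmin⟩ := A.exists_min_image f hA
  calc ∑ b ∈ B, f b ≤ ∑ _b ∈ B, f a :=
        Finset.sum_le_sum fun b hb => h a ha b hb
    _ = B.card • f a := by simp
    _ = A.card • f a := by rw [hcard]
    _ = ∑ _a ∈ A, f a := by simp
    _ ≤ ∑ a ∈ A, f a := Finset.sum_le_sum fun b hb => hmin b hb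

/-- The squared gating error for mask `S` under column orthogonality. -/
lemma aux_err_sq {m n : ℕ} (W : Matrix (Fin m) (Fin n) ℝ) (x : Fin n → ℝ)
    (horth : ∀ i j : Fin n, i ≠ j → ∑ k, W k i * W k j = 0)
    (S : Finset (Fin n)) :
    ∑ k, (W.mulVec x k - W.mulVec (maskV S x) k) ^ 2
      = ∑ i ∈ Sᶜ, x i ^ 2 * (∑ k, W k i ^ 2) := by
  have hdiff : ∀ k, W.mulVec x k - W.mulVec (maskV S x) k
      = ∑ i ∈ Sᶜ, W k i * x i := by
    intro k
    have h2 : ∑ i, W k i * maskV S x i = ∑ i ∈ S, W k i * x i := by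
      rw [← Finset.sum_subset (Finset.subset_univ S)
        (fun i _ hi => by simp [maskV, hi])]
      exact Finset.sum_congr rfl fun i hi => by simp [maskV, hi]
    have h3 : (∑ i ∈ Sᶜ, W k i * x i) + ∑ i ∈ S, W k i * x i
        = ∑ i, W k i * x i := Finset.sum_compl_add_sum S _
    simp only [Matrix.mulVec, dotProduct, h2]
    linarith
  simp_rw [hdiff, sq, Finset.sum_mul_sum]
  rw [Finset.sum_comm]
  refine Finset.sum_congr rfl fun i hi => ?_
  rw [Finset.sum_comm, Finset.sum_eq_single i]
  · rw [Finset.mul_sum]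
    exact Finset.sum_congr rfl fun k _ => by ring
  · intro j _ hne
    have hw : ∀ k, (W k i * x i) * (W k j * x j) = x i * x j * (W k i * W k j) :=
      fun k => by ring
    simp_rw [hw, ← Finset.mul_sum, horth i j (Ne.symm hne), mul_zero]
  · intro h
    exact absurd hi h

/-- for column-orthogonal `W`, the WINA top-`K` mask (by `|x i| * ‖W_{·,i}‖₂`)
has gating error no larger than the magnitude-only top-`K` mask (by `|x i|`). -/
theorem wina_leq_magnitude_gating_error
    (m n : ℕ) (W : Matrix (Fin m) (Fin n) ℝ) (x : Fin n → ℝ)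
    (horth : ∀ i j : Fin n, i ≠ j → ∑ k, W k i * W k j = 0)
    (K : ℕ)
    (Swina : Finset (Fin n)) (hWcard : Swina.card = K)
    (hWtop : ∀ i ∈ Swina, ∀ j ∉ Swina, |x j| * colN W j ≤ |x i| * colN W i)
    (Steal : Finset (Fin n)) (hTcard : Steal.card = K)
    (hTtop : ∀ i ∈ Steal, ∀ j ∉ Steal, |x j| ≤ |x i|) :
    eN (fun k => W.mulVec x k - W.mulVec (maskV Swina x) k)
      ≤ eN (fun k => W.mulVec x k - W.mulVec (maskV Steal x) k) := by
  unfold eN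
  apply Real.sqrt_le_sqrt
  rw [aux_err_sq W x horth Swina, aux_err_sq W x horth Steal]
  -- rewrite the summand as the square of the WINA score
  set t : Fin n → ℝ := fun i => (|x i| * colN W i) ^ 2 with ht
  have hconv : ∀ i, x i ^ 2 * (∑ k, W k i ^ 2) = t i := by
    intro i
    rw [ht]
    simp only [mul_pow, sq_abs, colN,
      Real.sq_sqrt (Finset.sum_nonneg fun k _ => sq_nonneg _)]
  simp_rw [hconv]
  -- reduce to comparing sums over the kept sets
  have hWina : (∑ i ∈ Swinaᶜ, t i) + ∑ i ∈ Swina, t i = ∑ i, t i :=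
    Finset.sum_compl_add_sum Swina t
  have hTeal : (∑ i ∈ Stealᶜ, t i) + ∑ i ∈ Steal, t i = ∑ i, t i :=
    Finset.sum_compl_add_sum Steal t
  have hinter1 : (∑ i ∈ Swina ∩ Steal, t i) + ∑ i ∈ Swina \ Steal, t i
      = ∑ i ∈ Swina, t i := Finset.sum_inter_add_sum_sdiff _ _ _
  have hinter2 : (∑ i ∈ Steal ∩ Swina, t i) + ∑ i ∈ Steal \ Swina, t i
      = ∑ i ∈ Steal, t i := Finset.sum_inter_add_sum_sdiff _ _ _
  rw [Finset.inter_comm] at hinter2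
  -- the two difference sets have the same cardinality
  have hc1 : (Swina \ Steal).card + (Swina ∩ Steal).card = Swina.card :=
    Finset.card_sdiff_add_card_inter _ _
  have hc2 : (Steal \ Swina).card + (Steal ∩ Swina).card = Steal.card :=
    Finset.card_sdiff_add_card_inter _ _
  rw [Finset.inter_comm] at hc2
  have hcard : (Swina \ Steal).card = (Steal \ Swina).card := by omega
  have key : ∑ i ∈ Steal \ Swina, t i ≤ ∑ i ∈ Swina \ Steal, t i := by
    apply aux_sum_le_sum_of_card_eq t _ _ hcard
    intro a ha b hb
    have ha' : a ∈ Swina := (Finset.mem_sdiff.mp ha).1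
    have hb' : b ∉ Swina := (Finset.mem_sdiff.mp hb).2
    have hs := hWtop a ha' b hb'
    have hnn : 0 ≤ |x b| * colN W b :=
      mul_nonneg (abs_nonneg _) (Real.sqrt_nonneg _)
    exact pow_le_pow_left₀ hnn hs 2
  linarith
end

section
/- Let f : ℝ → ℝ be monotonically increasing and 1-Lipschitz (e.g., applied entrywise), W ∈ ℝ^{m×n} column-orthogonal, x ∈ ℝⁿ. Then for any mask g ∈ {0,1}ⁿ, ‖f(W(g⊙x)) − f(Wx)‖₂² ≤ Σ_{i : g_i = 0} x_i² ‖W_{·,i}‖₂², where f is applied componentwise. Consequently the WINA top-K mask minimizes this upper bound among K-sparse masks. -/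
open Finset

lemma colN_sq {m n : ℕ} (W : Matrix (Fin m) (Fin n) ℝ) (i : Fin n) :
    colN W i ^ 2 = ∑ k, W k i ^ 2 := by
  rw [colN, Real.sq_sqrt]
  exact Finset.sum_nonneg fun k _ => sq_nonneg _

lemma sum_le_sum_of_card_eq {α : Type*} [DecidableEq α] (A B : Finset α)
    (h : A.card = B.card) (g : α → ℝ)
    (hab : ∀ u ∈ A, ∀ v ∈ B, g u ≤ g v) :
    ∑ i ∈ A, g i ≤ ∑ i ∈ B, g i := by
  have e := Finset.equivOfCardEq h
  calc ∑ i ∈ A, g i = ∑ a : A, g a := (Finset.sum_attach A g).symm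
    _ ≤ ∑ a : A, g (e a) := by
        apply Finset.sum_le_sum
        intro a _
        exact hab a a.2 (e a) (e a).2
    _ = ∑ b : B, g b := Equiv.sum_comp e fun b => g b
    _ = ∑ i ∈ B, g i := Finset.sum_attach B g

/-- for a monotonically increasing, 1-Lipschitz `f` applied entrywise and a
column-orthogonal `W`, the gating error after the nonlinearity is bounded by
`∑_{i ∉ S} x i ^ 2 * ‖W_{·,i}‖₂²`, and the WINA top-`K` mask minimizes this upper bound
among all masks keeping exactly `K` coordinates. -/
theorem wina_bound_with_monotone_lipschitz_activation
    (m n : ℕ) (W : Matrix (Fin m) (Fin n) ℝ) (x : Fin n → ℝ)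
    (horth : ∀ i j : Fin n, i ≠ j → ∑ k, W k i * W k j = 0)
    (f : ℝ → ℝ) (hmono : Monotone f) (hlip : ∀ a b : ℝ, |f a - f b| ≤ |a - b|)
    (K : ℕ)
    (Swina : Finset (Fin n)) (hWcard : Swina.card = K)
    (hWtop : ∀ i ∈ Swina, ∀ j ∉ Swina, |x j| * colN W j ≤ |x i| * colN W i) :
    (∀ S : Finset (Fin n),
      sqN (fun k => f (W.mulVec (maskV S x) k) - f (W.mulVec x k))
        ≤ ∑ i ∈ Sᶜ, x i ^ 2 * colN W i ^ 2) ∧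
    (∀ T : Finset (Fin n), T.card = K →
      ∑ i ∈ Swinaᶜ, x i ^ 2 * colN W i ^ 2 ≤ ∑ i ∈ Tᶜ, x i ^ 2 * colN W i ^ 2) := by
  constructor
  · intro S
    have key : ∑ k, (∑ i ∈ Sᶜ, x i * W k i) ^ 2
        = ∑ i ∈ Sᶜ, x i ^ 2 * ∑ k, W k i ^ 2 := by
      simp_rw [sq, Finset.sum_mul_sum]
      rw [Finset.sum_comm]
      refine Finset.sum_congr rfl fun i hi => ?_
      rw [Finset.sum_comm]
      rw [Finset.sum_eq_single_of_mem i hi]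
      · rw [Finset.mul_sum]
        refine Finset.sum_congr rfl fun k _ => by ring
      · intro j _ hji
        have := horth i j (fun h => hji (h.symm))
        calc ∑ k, x i * W k i * (x j * W k j)
            = x i * x j * ∑ k, W k i * W k j := by
              rw [Finset.mul_sum]; exact Finset.sum_congr rfl fun k _ => by ring
          _ = 0 := by rw [this, mul_zero]
    have hdiff : ∀ k, W.mulVec (maskV S x) k - W.mulVec x k
        = -∑ i ∈ Sᶜ, x i * W k i := by
      intro k
      simp only [Matrix.mulVec, dotProduct, maskV]
      rw [← Finset.sum_sub_distrib, ← Finset.sum_add_sum_compl S]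
      have h1 : ∑ i ∈ S, (W k i * (if i ∈ S then x i else 0) - W k i * x i) = 0 := by
        apply Finset.sum_eq_zero; intro i hi; simp [hi]
      have h2 : ∑ i ∈ Sᶜ, (W k i * (if i ∈ S then x i else 0) - W k i * x i)
          = -∑ i ∈ Sᶜ, x i * W k i := by
        rw [← Finset.sum_neg_distrib]
        refine Finset.sum_congr rfl fun i hi => ?_
        have : i ∉ S := Finset.mem_compl.mp hi
        simp [this]; ring
      rw [h1, h2, zero_add]
    calc sqN (fun k => f (W.mulVec (maskV S x) k) - f (W.mulVec x k))
        ≤ ∑ k, (W.mulVec (maskV S x) k - W.mulVec x k) ^ 2 := by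
          apply Finset.sum_le_sum
          intro k _
          have := hlip (W.mulVec (maskV S x) k) (W.mulVec x k)
          calc (f (W.mulVec (maskV S x) k) - f (W.mulVec x k)) ^ 2
              = |f (W.mulVec (maskV S x) k) - f (W.mulVec x k)| ^ 2 := (sq_abs _).symm
            _ ≤ |W.mulVec (maskV S x) k - W.mulVec x k| ^ 2 :=
                pow_le_pow_left₀ (abs_nonneg _) this 2
            _ = _ := sq_abs _
      _ = ∑ k, (∑ i ∈ Sᶜ, x i * W k i) ^ 2 := by
          refine Finset.sum_congr rfl fun k _ => ?_
          rw [hdiff k, neg_sq]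
      _ = ∑ i ∈ Sᶜ, x i ^ 2 * ∑ k, W k i ^ 2 := key
      _ = ∑ i ∈ Sᶜ, x i ^ 2 * colN W i ^ 2 := by
          refine Finset.sum_congr rfl fun i _ => by rw [colN_sq]
  · intro T hT
    have hcard : (Swinaᶜ \ Tᶜ).card = (Tᶜ \ Swinaᶜ).card := by
      apply Finset.card_sdiff_comm
      simp [Finset.card_compl, hWcard, hT]
    have hsplit : ∀ A B : Finset (Fin n),
        ∑ i ∈ A, x i ^ 2 * colN W i ^ 2
        = ∑ i ∈ A \ B, x i ^ 2 * colN W i ^ 2 + ∑ i ∈ A ∩ B, x i ^ 2 * colN W i ^ 2 := by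
      intro A B
      rw [add_comm]
      exact (Finset.sum_inter_add_sum_sdiff A B _).symm
    rw [hsplit Swinaᶜ Tᶜ, hsplit Tᶜ Swinaᶜ, Finset.inter_comm]
    apply add_le_add_left
    apply sum_le_sum_of_card_eq _ _ hcard
    intro u hu v hv
    have hu1 : u ∉ Swina := Finset.mem_compl.mp (Finset.mem_sdiff.mp hu).1
    have hv1 : v ∈ Swina := by
      have := (Finset.mem_sdiff.mp hv).2
      simpa using this
    have h := hWtop v hv1 u hu1
    have hnn : 0 ≤ |x u| * colN W u :=
      mul_nonneg (abs_nonneg _) (Real.sqrt_nonneg _)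
    calc x u ^ 2 * colN W u ^ 2 = (|x u| * colN W u) ^ 2 := by
          rw [mul_pow, sq_abs]
      _ ≤ (|x v| * colN W v) ^ 2 := pow_le_pow_left₀ hnn h 2
      _ = x v ^ 2 * colN W v ^ 2 := by rw [mul_pow, sq_abs]
end
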